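/- arXiv:1007.1219 — 2 statements merged into one kernel-verified Lean document; each statement's English description precedes it below -/
import Mathlib

section
/- The second Brocard point H− lies on each of the three tangent circles: dist aC H− = dist aC C, dist bA H− = dist bA A, and dist cB H− = dist cB B. That is, H− lies on the circle through A and C tangent to BC at C, on the circle through B and A tangent to CA at A, and on the circle through C and B tangent to AB at B. -/
/-!
Put the origin at `C` and let `P` be the centre of the circle through `A` tangent to `BC` at `C`.
A point `X` lies on that circle iff `‖X - C‖² = 2⟪P - C, X - C⟫`; tangency gives
`⟪P - C, B - C⟫ = 0` and `A` on the circle gives `2⟪P - C, A - C⟫ = b²`. Since `H₋ - C` is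
proportional to `a²b² (A - C) + b²c² (B - C)`, the circle equation for `H₋` becomes a polynomial
identity modulo the law of cosines `c² = a² + b² - 2⟪A - C, B - C⟫`. The other two circles
follow because `H₋` is invariant under cyclic relabelling of the triangle.
-/

open EuclideanGeometry RealInnerProductSpace

theorem secondBrocardPoint_denom_pos {M : Type*} [MetricSpace M] {A B C : M}
    (hAB : A ≠ B) (hBC : B ≠ C) :
    0 < dist B C ^ 2 * dist C A ^ 2 + dist C A ^ 2 * dist A B ^ 2
      + dist A B ^ 2 * dist B C ^ 2 := by
  have := dist_pos.2 hAB
  have := dist_pos.2 hBC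
  positivity

section NormedSpace

variable {V : Type*} [NormedAddCommGroup V] [NormedSpace ℝ V]

/-- The second Brocard point `H₋`, with areal coordinates `(1/c² : 1/a² : 1/b²)`. -/
noncomputable def secondBrocardPoint (A B C : V) : V :=
  (dist B C ^ 2 * dist C A ^ 2 + dist C A ^ 2 * dist A B ^ 2 + dist A B ^ 2 * dist B C ^ 2)⁻¹ •
    ((dist B C ^ 2 * dist C A ^ 2) • A + (dist C A ^ 2 * dist A B ^ 2) • B
      + (dist A B ^ 2 * dist B C ^ 2) • C)

theorem secondBrocardPoint_rotate (A B C : V) :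
    secondBrocardPoint B C A = secondBrocardPoint A B C := by
  unfold secondBrocardPoint
  rw [show dist C A ^ 2 * dist A B ^ 2 + dist A B ^ 2 * dist B C ^ 2
      + dist B C ^ 2 * dist C A ^ 2
      = dist B C ^ 2 * dist C A ^ 2 + dist C A ^ 2 * dist A B ^ 2
      + dist A B ^ 2 * dist B C ^ 2 by ring]
  congr 1
  abel

theorem secondBrocardPoint_sub_vertex {A B C : V} (hAB : A ≠ B) (hBC : B ≠ C) :
    secondBrocardPoint A B C - C =
      (dist B C ^ 2 * dist C A ^ 2 + dist C A ^ 2 * dist A B ^ 2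
        + dist A B ^ 2 * dist B C ^ 2)⁻¹ •
        ((dist B C ^ 2 * dist C A ^ 2) • (A - C) + (dist C A ^ 2 * dist A B ^ 2) • (B - C)) := by
  have hS := (secondBrocardPoint_denom_pos hAB hBC).ne'
  unfold secondBrocardPoint
  rw [eq_inv_smul_iff₀ hS, smul_sub, smul_inv_smul₀ hS]
  module

end NormedSpace

section InnerProductSpace

variable {V : Type*} [NormedAddCommGroup V] [InnerProductSpace ℝ V]

theorem dist_eq_dist_iff_norm_sub_sq_eq_two_inner (P C X : V) :
    dist P X = dist P C ↔ ‖X - C‖ ^ 2 = 2 * ⟪P - C, X - C⟫ := by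
  have hPX : dist P X ^ 2 = dist P C ^ 2 - 2 * ⟪P - C, X - C⟫ + ‖X - C‖ ^ 2 := by
    rw [dist_eq_norm, dist_eq_norm, ← norm_sub_sq_real, sub_sub_sub_cancel_right]
  rw [← sq_eq_sq₀ dist_nonneg dist_nonneg, hPX]
  constructor <;> intro h <;> linarith

theorem dist_secondBrocardPoint_eq_of_dist_eq_of_inner_eq_zero {A B C P : V}
    (hAB : A ≠ B) (hBC : B ≠ C) (hPA : dist P A = dist P C) (hPB : ⟪P - C, B - C⟫ = 0) :
    dist P (secondBrocardPoint A B C) = dist P C := by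
  have hS := (secondBrocardPoint_denom_pos hAB hBC).ne'
  have hcos : dist A B ^ 2 = ‖A - C‖ ^ 2 - 2 * ⟪A - C, B - C⟫ + ‖B - C‖ ^ 2 := by
    rw [dist_eq_norm, ← norm_sub_sq_real, sub_sub_sub_cancel_right]
  rw [dist_eq_dist_iff_norm_sub_sq_eq_two_inner] at hPA ⊢
  rw [secondBrocardPoint_sub_vertex hAB hBC]
  rw [dist_comm C A, dist_eq_norm B C, dist_eq_norm A C] at hS ⊢
  set a := ‖B - C‖
  set b := ‖A - C‖
  set c := dist A B
  set S := a ^ 2 * b ^ 2 + b ^ 2 * c ^ 2 + c ^ 2 * a ^ 2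
  set w := (a ^ 2 * b ^ 2) • (A - C) + (b ^ 2 * c ^ 2) • (B - C)
  have hw : ‖w‖ ^ 2 = S * (2 * ⟪P - C, w⟫) := by
    rw [norm_add_sq_real, norm_smul, norm_smul, inner_add_right, real_inner_smul_right,
      real_inner_smul_right, real_inner_smul_left, real_inner_smul_right, hPB,
      Real.norm_eq_abs, Real.norm_eq_abs, abs_of_nonneg (by positivity),
      abs_of_nonneg (by positivity)]
    linear_combination (a ^ 2 * b ^ 4 * c ^ 2) * hcos + (S * a ^ 2 * b ^ 2) * hPA
  rw [norm_smul, mul_pow, real_inner_smul_right, hw, Real.norm_eq_abs, sq_abs]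
  field_simp

end InnerProductSpace

theorem second_brocard_on_tangent_circles
    (A B C aC bA cB Hm : EuclideanSpace ℝ (Fin 2))
    (hABC : AffineIndependent ℝ ![A, B, C])
    (a b c : ℝ) (ha : a = dist B C) (hb : b = dist C A) (hc : c = dist A B)
    (hHm : Hm = (a^2*b^2 + b^2*c^2 + c^2*a^2)⁻¹ •
      ((a^2*b^2) • A + (b^2*c^2) • B + (c^2*a^2) • C))
    (haC1 : dist aC A = dist aC C) (haC2 : ⟪aC - C, B - C⟫ = 0)
    (hbA1 : dist bA B = dist bA A) (hbA2 : ⟪bA - A, C - A⟫ = 0)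
    (hcB1 : dist cB C = dist cB B) (hcB2 : ⟪cB - B, A - B⟫ = 0) :
    dist aC Hm = dist aC C ∧ dist bA Hm = dist bA A ∧ dist cB Hm = dist cB B := by
  have hAB : A ≠ B := hABC.injective.ne (by decide : (0 : Fin 3) ≠ 1)
  have hBC : B ≠ C := hABC.injective.ne (by decide : (1 : Fin 3) ≠ 2)
  have hCA : C ≠ A := hABC.injective.ne (by decide : (2 : Fin 3) ≠ 0)
  obtain rfl : Hm = secondBrocardPoint A B C := by subst ha hb hc; exact hHm
  refine ⟨?_, ?_, ?_⟩
  · exact dist_secondBrocardPoint_eq_of_dist_eq_of_inner_eq_zero hAB hBC haC1 haC2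
  · rw [← secondBrocardPoint_rotate]
    exact dist_secondBrocardPoint_eq_of_dist_eq_of_inner_eq_zero hBC hCA hbA1 hbA2
  · rw [← secondBrocardPoint_rotate, ← secondBrocardPoint_rotate]
    exact dist_secondBrocardPoint_eq_of_dist_eq_of_inner_eq_zero hCA hAB hcB1 hcB2
end

section
/- Let n = c²(2a² + 2b² − c²)/Δ, where Δ = (a+b+c)(b+c−a)(c+a−b)(a+b−c). Then (dist cB cC)² = n·a², (dist cC cA)² = n·b², and (dist cA cB)² = n·c²; hence triangle cA cB cC is similar to triangle ABC. -/
/-!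
Put `u = B - A`, `v = C - A`. In the plane a vector `w` is recovered from `⟪w, u⟫` and
`⟪w, v⟫` by Cramer's rule, which gives
`(Δ / 4) ‖w‖² = ⟪w, v⟫² c² - ⟪w, u⟫ ⟪w, v⟫ (b² + c² - a²) + ⟪w, u⟫² b²`
(the Gram determinant of `u, v, w` vanishes). The defining conditions fix these two inner
products for each point: `(c²/2, b²/2)` for `O - A`, `(0, b²/2)` for `cA - A`,
`(c², (b² + c²)/2)` for `cB - A`, and `(c²/2, (c² - a²)/2)` for `cC - A = B - O`.
Applied to the differences of the three centres, the formula gives the three distances.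
Finally `n = 1 + (a² - b²)² / Δ > 0`.
-/

open EuclideanGeometry RealInnerProductSpace

section InnerProductSpace

variable {V : Type*} [NormedAddCommGroup V] [InnerProductSpace ℝ V]

theorem inner_sq_lt_norm_sq_mul_norm_sq {u v : V} (h : LinearIndependent ℝ ![u, v]) :
    ⟪u, v⟫ ^ 2 < ‖u‖ ^ 2 * ‖v‖ ^ 2 := by
  refine lt_of_le_of_ne ?_ fun heq => h.ne_zero 0 ?_
  · rw [← mul_pow, ← sq_abs]
    exact pow_le_pow_left₀ (abs_nonneg _) (abs_real_inner_le_norm u v) 2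
  have hzero : ‖(-⟪u, v⟫) • u + (‖u‖ ^ 2) • v‖ ^ 2 = 0 := by
    rw [norm_add_sq_real, norm_smul, norm_smul, real_inner_smul_left, real_inner_smul_right,
      Real.norm_eq_abs, Real.norm_eq_abs, abs_neg, abs_of_nonneg (sq_nonneg ‖u‖), mul_pow,
      sq_abs]
    linear_combination (-‖u‖ ^ 2) * heq
  have ht := (LinearIndependent.pair_iff.mp h _ _
    (norm_eq_zero.mp (pow_eq_zero_iff two_ne_zero |>.mp hzero))).2
  simpa using ht

theorem dist_sq_eq_dist_sq_add_dist_sq_sub_two_mul_inner (A B C : V) :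
    dist B C ^ 2 = dist A B ^ 2 + dist C A ^ 2 - 2 * ⟪B - A, C - A⟫ := by
  rw [dist_eq_norm, dist_comm A B, dist_eq_norm B A, dist_eq_norm C A, add_sub_right_comm,
    ← norm_sub_sq_real, sub_sub_sub_cancel_right]

theorem inner_sub_sub_eq_of_dist_eq {O A B : V} (h : dist O A = dist O B) :
    ⟪O - A, B - A⟫ = dist A B ^ 2 / 2 :=
  AffineSubspace.mem_perpBisector_iff_inner_eq.mp
    (AffineSubspace.mem_perpBisector_iff_dist_eq.mpr h)

end InnerProductSpace

namespace Orientation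

variable {V : Type*} [NormedAddCommGroup V] [InnerProductSpace ℝ V]
  [Fact (Module.finrank ℝ V = 2)] (o : Orientation ℝ V (Fin 2))

local notation "ω" => o.areaForm
local notation "J" => o.rightAngleRotation

theorem eq_zero_of_inner_eq_zero_of_areaForm_ne_zero {u v w : V} (hu : ⟪w, u⟫ = 0)
    (hv : ⟪w, v⟫ = 0) (huv : ω u v ≠ 0) : w = 0 := by
  have h := o.inner_mul_areaForm_sub w u v
  rw [hu, hv, zero_mul, mul_zero, sub_zero, eq_comm, mul_eq_zero] at h
  simpa [huv] using h

/-- Cramer's rule. -/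
theorem areaForm_smul_eq_rightAngleRotation {u v : V} (huv : ω u v ≠ 0) (w : V) :
    ω u v • w = J (⟪w, v⟫ • u - ⟪w, u⟫ • v) := by
  rw [← sub_eq_zero]
  apply o.eq_zero_of_inner_eq_zero_of_areaForm_ne_zero _ _ huv <;>
  · simp only [map_sub, map_smul, inner_sub_left, real_inner_smul_left,
      inner_rightAngleRotation_left, areaForm_apply_self, o.areaForm_swap v u]
    ring

end Orientation

section Plane

variable {V : Type*} [NormedAddCommGroup V] [InnerProductSpace ℝ V]
  [Fact (Module.finrank ℝ V = 2)]

theorem gram_mul_norm_sq {u v : V} (h : LinearIndependent ℝ ![u, v]) (w : V) :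
    (‖u‖ ^ 2 * ‖v‖ ^ 2 - ⟪u, v⟫ ^ 2) * ‖w‖ ^ 2 =
      ⟪w, v⟫ ^ 2 * ‖u‖ ^ 2 - 2 * ⟪w, u⟫ * ⟪w, v⟫ * ⟪u, v⟫ + ⟪w, u⟫ ^ 2 * ‖v‖ ^ 2 := by
  have : FiniteDimensional ℝ V := .of_fact_finrank_eq_two
  let o : Orientation ℝ V (Fin 2) :=
    (Module.finBasisOfFinrankEq ℝ V Fact.out).orientation
  have hω : o.areaForm u v ≠ 0 := by
    intro h0
    have := o.inner_sq_add_areaForm_sq u v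
    rw [h0] at this
    linarith [inner_sq_lt_norm_sq_mul_norm_sq h]
  have hJ := congrArg (‖·‖ ^ 2) (o.areaForm_smul_eq_rightAngleRotation hω w)
  simp only [LinearIsometryEquiv.norm_map, norm_smul, mul_pow, Real.norm_eq_abs, sq_abs,
    norm_sub_sq_real, real_inner_smul_left, real_inner_smul_right] at hJ
  rw [← o.inner_sq_add_areaForm_sq u v]
  linear_combination hJ

end Plane

theorem AffineIndependent.linearIndependent_vsub_vsub {k V P : Type*} [Ring k]
    [AddCommGroup V] [Module k V] [AddTorsor V P] {p₁ p₂ p₃ : P}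
    (h : AffineIndependent k ![p₁, p₂, p₃]) :
    LinearIndependent k ![p₂ -ᵥ p₁, p₃ -ᵥ p₁] := by
  rw [affineIndependent_iff_linearIndependent_vsub k _ (0 : Fin 3),
    ← linearIndependent_equiv (finSuccAboveEquiv (0 : Fin 3))] at h
  convert h using 1
  ext i
  fin_cases i <;> rfl

theorem EuclideanGeometry.orthogonalProjection_line_eq_midpoint {V P : Type*}
    [NormedAddCommGroup V] [InnerProductSpace ℝ V] [MetricSpace P] [NormedAddTorsor V P]
    {A B O : P} [(line[ℝ, A, B]).direction.HasOrthogonalProjection] (h : dist O A = dist O B) :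
    (orthogonalProjection line[ℝ, A, B] O : P) = midpoint ℝ A B := by
  rw [coe_orthogonalProjection_eq_iff_mem, direction_affineSpan, vectorSpan_pair]
  refine ⟨AffineMap.lineMap_mem_affineSpan_pair _ A B, ?_⟩
  rw [Submodule.mem_orthogonal_singleton_iff_inner_right, midpoint_comm,
    ← AffineSubspace.mem_perpBisector_iff_inner_eq_zero',
    AffineSubspace.mem_perpBisector_iff_dist_eq]
  exact h.symm

theorem EuclideanGeometry.reflection_line_eq_add_sub {V : Type*} [NormedAddCommGroup V]
    [InnerProductSpace ℝ V] {A B O : V} [(line[ℝ, A, B]).direction.HasOrthogonalProjection]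
    (h : dist O A = dist O B) : reflection line[ℝ, A, B] O = A + B - O := by
  rw [reflection_apply', orthogonalProjection_line_eq_midpoint h, vsub_eq_sub, vadd_eq_add,
    ← midpoint_add_self ℝ A B]
  abel

/-- The `Δ` of the statement, `16 · area²` of a triangle with sides `a, b, c` (Heron). -/
def heronProduct (a b c : ℝ) : ℝ := (a + b + c) * (b + c - a) * (c + a - b) * (a + b - c)

theorem heronProduct_eq (a b c : ℝ) :
    heronProduct a b c = 4 * b ^ 2 * c ^ 2 - (b ^ 2 + c ^ 2 - a ^ 2) ^ 2 := by
  unfold heronProduct; ring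

theorem heronProduct_add_sq (a b c : ℝ) :
    heronProduct a b c + (a ^ 2 - b ^ 2) ^ 2 = c ^ 2 * (2 * a ^ 2 + 2 * b ^ 2 - c ^ 2) := by
  unfold heronProduct; ring

section Triangle

variable {V : Type*} [NormedAddCommGroup V] [InnerProductSpace ℝ V]

theorem heronProduct_pos {A B C : V} (h : LinearIndependent ℝ ![B - A, C - A]) :
    0 < heronProduct (dist B C) (dist C A) (dist A B) := by
  have := inner_sq_lt_norm_sq_mul_norm_sq h
  rw [heronProduct_eq, dist_sq_eq_dist_sq_add_dist_sq_sub_two_mul_inner A B C, dist_comm A B,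
    dist_eq_norm B A, dist_eq_norm C A]
  linarith

theorem heronProduct_mul_dist_sq [Fact (Module.finrank ℝ V = 2)] {A B C P Q : V}
    (h : LinearIndependent ℝ ![B - A, C - A]) {xP yP xQ yQ : ℝ}
    (hxP : ⟪P - A, B - A⟫ = xP) (hyP : ⟪P - A, C - A⟫ = yP)
    (hxQ : ⟪Q - A, B - A⟫ = xQ) (hyQ : ⟪Q - A, C - A⟫ = yQ) :
    heronProduct (dist B C) (dist C A) (dist A B) * dist P Q ^ 2 =
      4 * ((yP - yQ) ^ 2 * dist A B ^ 2
        - (xP - xQ) * (yP - yQ) * (dist C A ^ 2 + dist A B ^ 2 - dist B C ^ 2)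
        + (xP - xQ) ^ 2 * dist C A ^ 2) := by
  have hPQ : P - Q = (P - A) - (Q - A) := by abel
  have hx : ⟪P - Q, B - A⟫ = xP - xQ := by rw [hPQ, inner_sub_left, hxP, hxQ]
  have hy : ⟪P - Q, C - A⟫ = yP - yQ := by rw [hPQ, inner_sub_left, hyP, hyQ]
  rw [heronProduct_eq, dist_sq_eq_dist_sq_add_dist_sq_sub_two_mul_inner A B C, ← hx, ← hy,
    dist_eq_norm P Q, dist_comm A B, dist_eq_norm B A, dist_eq_norm C A]
  linear_combination 4 * gram_mul_norm_sq h (P - Q)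

variable {A B C O P : V}

theorem inner_add_sub_sub_of_dist_eq (hOB : dist O A = dist O B) (hOC : dist O A = dist O C) :
    ⟪A + B - O - A, B - A⟫ = dist A B ^ 2 / 2 ∧
      ⟪A + B - O - A, C - A⟫ = (dist A B ^ 2 - dist B C ^ 2) / 2 := by
  have hOB' := inner_sub_sub_eq_of_dist_eq hOB
  have hOC' := inner_sub_sub_eq_of_dist_eq hOC
  have hBC := dist_sq_eq_dist_sq_add_dist_sq_sub_two_mul_inner A B C
  have hAB : ⟪B - A, B - A⟫ = dist A B ^ 2 := by
    rw [real_inner_self_eq_norm_sq, ← dist_eq_norm, dist_comm]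
  rw [dist_comm A C] at hOC'
  have hsplit (w : V) : ⟪A + B - O - A, w⟫ = ⟪B - A, w⟫ - ⟪O - A, w⟫ := by
    rw [← inner_sub_left]
    congr 1
    abel
  rw [hsplit, hsplit]
  constructor <;> linarith

theorem inner_sub_sub_of_dist_eq_of_inner_eq_zero (hPC : dist P C = dist P B)
    (hPB : ⟪P - B, A - B⟫ = 0) :
    ⟪P - A, B - A⟫ = dist A B ^ 2 ∧ ⟪P - A, C - A⟫ = (dist C A ^ 2 + dist A B ^ 2) / 2 := by
  have hPC' := inner_sub_sub_eq_of_dist_eq hPC.symm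
  have hBC := dist_sq_eq_dist_sq_add_dist_sq_sub_two_mul_inner A B C
  have hAB : ⟪B - A, B - A⟫ = dist A B ^ 2 := by
    rw [real_inner_self_eq_norm_sq, ← dist_eq_norm, dist_comm]
  have hPB' : ⟪P - B, B - A⟫ = 0 := by rw [← neg_sub A B, inner_neg_right, hPB, neg_zero]
  have hPCA : ⟪P - B, C - A⟫ = ⟪P - B, C - B⟫ + ⟪P - B, B - A⟫ := by
    rw [← inner_add_right, sub_add_sub_cancel]
  rw [← sub_add_sub_cancel P B A, inner_add_left, inner_add_left]
  constructor <;> linarith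

theorem heronProduct_mul_dist_sq_centers [Fact (Module.finrank ℝ V = 2)] {cA cB cC : V}
    (hli : LinearIndependent ℝ ![B - A, C - A]) {a b c : ℝ} (ha : a = dist B C)
    (hb : b = dist C A) (hc : c = dist A B) (hcC : cC = A + B - O)
    (hOB : dist O A = dist O B) (hOC : dist O A = dist O C)
    (hcA1 : dist cA C = dist cA A) (hcA2 : ⟪cA - A, B - A⟫ = 0)
    (hcB1 : dist cB C = dist cB B) (hcB2 : ⟪cB - B, A - B⟫ = 0) :
    heronProduct a b c * dist cB cC ^ 2 = c ^ 2 * (2 * a ^ 2 + 2 * b ^ 2 - c ^ 2) * a ^ 2 ∧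
    heronProduct a b c * dist cC cA ^ 2 = c ^ 2 * (2 * a ^ 2 + 2 * b ^ 2 - c ^ 2) * b ^ 2 ∧
    heronProduct a b c * dist cA cB ^ 2 = c ^ 2 * (2 * a ^ 2 + 2 * b ^ 2 - c ^ 2) * c ^ 2 := by
  subst ha hb hc hcC
  obtain ⟨hC1, hC2⟩ := inner_add_sub_sub_of_dist_eq hOB hOC
  obtain ⟨hB1, hB2⟩ := inner_sub_sub_of_dist_eq_of_inner_eq_zero hcB1 hcB2
  have hA2 : ⟪cA - A, C - A⟫ = dist C A ^ 2 / 2 := by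
    rw [inner_sub_sub_eq_of_dist_eq hcA1.symm, dist_comm]
  refine ⟨?_, ?_, ?_⟩
  · rw [heronProduct_mul_dist_sq hli hB1 hB2 hC1 hC2]; ring
  · rw [heronProduct_mul_dist_sq hli hC1 hC2 hcA2 hA2]; ring
  · rw [heronProduct_mul_dist_sq hli hcA2 hA2 hB1 hB2]; ring

end Triangle

theorem eq_sqrt_mul_of_sq_eq_mul_sq {x y n : ℝ} (hx : 0 ≤ x) (hy : 0 ≤ y) (hn : 0 ≤ n)
    (h : x ^ 2 = n * y ^ 2) : x = √n * y := by
  rw [← Real.sqrt_sq hx, h, Real.sqrt_mul hn, Real.sqrt_sq hy]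

theorem triangle_cA_cB_cC_similar
    (A B C O cA cB cC : EuclideanSpace ℝ (Fin 2))
    (hABC : AffineIndependent ℝ ![A, B, C])
    (a b c : ℝ) (ha : a = dist B C) (hb : b = dist C A) (hc : c = dist A B)
    (hO : O = (⟨![A, B, C], hABC⟩ : Affine.Triangle ℝ (EuclideanSpace ℝ (Fin 2))).circumcenter)
    (hcC : cC = EuclideanGeometry.reflection (affineSpan ℝ {A, B}) O)
    (hcA1 : dist cA C = dist cA A) (hcA2 : ⟪cA - A, B - A⟫ = 0)
    (hcB1 : dist cB C = dist cB B) (hcB2 : ⟪cB - B, A - B⟫ = 0)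
    (n : ℝ)
    (hn : n = c^2 * (2*a^2 + 2*b^2 - c^2) / ((a+b+c)*(b+c-a)*(c+a-b)*(a+b-c))) :
    ((dist cB cC)^2 = n * a^2 ∧ (dist cC cA)^2 = n * b^2 ∧ (dist cA cB)^2 = n * c^2) ∧
    ∃ r : ℝ, 0 < r ∧ dist cB cC = r * dist B C ∧ dist cC cA = r * dist C A ∧
      dist cA cB = r * dist A B := by
  have : Fact (Module.finrank ℝ (EuclideanSpace ℝ (Fin 2)) = 2) :=
    ⟨finrank_euclideanSpace_fin⟩
  set t : Affine.Triangle ℝ (EuclideanSpace ℝ (Fin 2)) := ⟨![A, B, C], hABC⟩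
  have hR (i : Fin 3) : dist O (t.points i) = t.circumradius := by
    rw [hO, dist_comm]
    exact t.dist_circumcenter_eq_circumradius i
  have hOB : dist O A = dist O B := (hR 0).trans (hR 1).symm
  have hOC : dist O A = dist O C := (hR 0).trans (hR 2).symm
  have hli : LinearIndependent ℝ ![B - A, C - A] := hABC.linearIndependent_vsub_vsub
  obtain ⟨h1, h2, h3⟩ := heronProduct_mul_dist_sq_centers hli ha hb hc
    (hcC.trans (reflection_line_eq_add_sub hOB)) hOB hOC hcA1 hcA2 hcB1 hcB2
  have hΔ : 0 < heronProduct a b c := by rw [ha, hb, hc]; exact heronProduct_pos hli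
  have hn' : n = c ^ 2 * (2 * a ^ 2 + 2 * b ^ 2 - c ^ 2) / heronProduct a b c := hn
  have hn_pos : 0 < n := by rw [hn', ← heronProduct_add_sq]; positivity
  have hscale {x y : ℝ}
      (h : heronProduct a b c * x = c ^ 2 * (2 * a ^ 2 + 2 * b ^ 2 - c ^ 2) * y) : x = n * y := by
    rw [hn', div_mul_eq_mul_div, eq_div_iff hΔ.ne']
    linear_combination h
  refine ⟨⟨hscale h1, hscale h2, hscale h3⟩, √n, Real.sqrt_pos.2 hn_pos, ?_, ?_, ?_⟩
  · exact eq_sqrt_mul_of_sq_eq_mul_sq dist_nonneg dist_nonneg hn_pos.le (ha ▸ hscale h1)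
  · exact eq_sqrt_mul_of_sq_eq_mul_sq dist_nonneg dist_nonneg hn_pos.le (hb ▸ hscale h2)
  · exact eq_sqrt_mul_of_sq_eq_mul_sq dist_nonneg dist_nonneg hn_pos.le (hc ▸ hscale h3)
end
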